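/- Let r ≥ 1 and let E_1, …, E_r be finite-dimensional complex vector spaces such that each E_i = F_i ⊕ L_i with dim_ℂ L_i = 1, with V, V*, V_F, V_F*, V_L, V_L*, and the block-diagonal embeddings ε, ᵗε as usual, and let H = ∏_{i=1}^{r} GL(E_i) act on V by (h·x)_i = h_{i+1} ∘ x_i ∘ h_i^{-1} and on V* by (h·y)_i = h_i ∘ y_i ∘ h_{i+1}^{-1}. Let y_F ∈ V_F*, let y_L ∈ V_L* have all components nonzero, set y = ᵗε(y_F, y_L), and let x ∈ V be any element such that (x, y) is commuting. Let s ∈ H be the element with s_i = id_{F_i} ⊕ (−id_{L_i}) for every i. Then s lies in the same connected component as the identity of the stabilizer Z_H(x, y) = { h ∈ H : h·x = x and h·y = y }, where Z_H(x, y) carries the subspace topology induced from the standard (Euclidean) topology on ∏_{i=1}^{r} GL(E_i). In fact, the connected subgroup { (a·id_{F_i} ⊕ b·id_{L_i})_{i=1}^{r} : a, b ∈ ℂ^× } of H is contained in Z_H(x, y) and contains both s and the identity. -/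

import Mathlib

/-- The Vogan variety `V = ∏_{i=1}^{r-1} Hom_ℂ(E_i, E_{i+1})`, realized with continuous
linear maps between normed complex vector spaces (in finite dimension every linear map is
continuous). -/
abbrev VogC (n : ℕ) (E : Fin (n + 1) → Type) [∀ i, NormedAddCommGroup (E i)]
    [∀ i, NormedSpace ℂ (E i)] : Type :=
  ∀ i : Fin n, E i.castSucc →L[ℂ] E i.succ

/-- The dual Vogan variety `V* = ∏_{i=1}^{r-1} Hom_ℂ(E_{i+1}, E_i)`. -/
abbrev VogDC (n : ℕ) (E : Fin (n + 1) → Type) [∀ i, NormedAddCommGroup (E i)]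
    [∀ i, NormedSpace ℂ (E i)] : Type :=
  ∀ i : Fin n, E i.succ →L[ℂ] E i.castSucc

variable {n : ℕ}

section defs
variable {E : Fin (n + 1) → Type} [∀ i, NormedAddCommGroup (E i)] [∀ i, NormedSpace ℂ (E i)]

/-- The commuting condition `[x, y] = 0`, expressed blockwise:
`x_{i-1} ∘ y_{i-1} = y_i ∘ x_i` on `E_i` for `i = 1, …, r`, with the boundary conventions
`x_0 = y_0 = x_r = y_r = 0`. -/
def IsConormalC (x : VogC n E) (y : VogDC n E) : Prop :=
  ∀ j : Fin (n + 1),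
    Fin.cases (motive := fun j => E j →L[ℂ] E j) 0 (fun i => (x i).comp (y i)) j
      = Fin.lastCases (motive := fun j => E j →L[ℂ] E j) 0 (fun i => (y i).comp (x i)) j

/-- The stabilizer `Z_H(x, y)` of the pair `(x, y)` in `H = ∏_{i=1}^r GL(E_i)`, realized
as the set of families `h` of invertible endomorphisms with `h_{i+1} ∘ x_i ∘ h_i⁻¹ = x_i`
and `h_i ∘ y_i ∘ h_{i+1}⁻¹ = y_i`. -/
def stabSet (x : VogC n E) (y : VogDC n E) : Set (∀ i : Fin (n + 1), E i →L[ℂ] E i) :=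
  {h | (∀ i, IsUnit (h i)) ∧
    (∀ i : Fin n, (h i.succ).comp ((x i).comp (Ring.inverse (h i.castSucc))) = x i) ∧
    (∀ i : Fin n, (h i.castSucc).comp ((y i).comp (Ring.inverse (h i.succ))) = y i)}

end defs

section FL
variable (F L : Fin (n + 1) → Type)
  [∀ i, NormedAddCommGroup (F i)] [∀ i, NormedSpace ℂ (F i)]
  [∀ i, NormedAddCommGroup (L i)] [∀ i, NormedSpace ℂ (L i)]

/-- The element `s ∈ H` with `s_i = id_{F_i} ⊕ (−id_{L_i})`. -/
def sElt : ∀ i : Fin (n + 1), (F i × L i) →L[ℂ] (F i × L i) :=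
  fun i => (ContinuousLinearMap.id ℂ (F i)).prodMap (-(ContinuousLinearMap.id ℂ (L i)))

/-- The subgroup `{(a·id_{F_i} ⊕ b·id_{L_i})_i : a, b ∈ ℂ^×}` of `H`. -/
def torus : Set (∀ i : Fin (n + 1), (F i × L i) →L[ℂ] (F i × L i)) :=
  {g | ∃ a b : ℂ, a ≠ 0 ∧ b ≠ 0 ∧
    g = fun i => (a • ContinuousLinearMap.id ℂ (F i)).prodMap
      (b • ContinuousLinearMap.id ℂ (L i))}

end FL


open Module ContinuousLinearMap

lemma bij_of_ne_zero {A B : Type} [NormedAddCommGroup A] [NormedSpace ℂ A]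
    [FiniteDimensional ℂ A] [NormedAddCommGroup B] [NormedSpace ℂ B]
    [FiniteDimensional ℂ B] (hA : finrank ℂ A = 1) (hB : finrank ℂ B = 1)
    (q : A →L[ℂ] B) (hq : q ≠ 0) : Function.Surjective q ∧ Function.Injective q := by
  have hne : LinearMap.range (q : A →ₗ[ℂ] B) ≠ ⊥ := by
    intro h
    apply hq
    ext v
    have : q v ∈ LinearMap.range (q : A →ₗ[ℂ] B) := ⟨v, rfl⟩
    rw [h] at this
    simpa using this
  have h1 : finrank ℂ (LinearMap.range (q : A →ₗ[ℂ] B)) = 1 := by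
    have hle : finrank ℂ (LinearMap.range (q : A →ₗ[ℂ] B)) ≤ 1 :=
      hB ▸ Submodule.finrank_le _
    have hpos : finrank ℂ (LinearMap.range (q : A →ₗ[ℂ] B)) ≠ 0 := by
      simpa [Submodule.finrank_eq_zero] using hne
    omega
  have hsurj : Function.Surjective q := by
    have := Submodule.eq_top_of_finrank_eq (h1.trans hB.symm)
    exact LinearMap.range_eq_top.mp this
  exact ⟨hsurj, (LinearMap.injective_iff_surjective_of_finrank_eq_finrank
    (hA.trans hB.symm)).mpr hsurj⟩

section Blocks

variable {n : ℕ} (F L : Fin (n + 1) → Type)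
  [∀ i, NormedAddCommGroup (F i)] [∀ i, NormedSpace ℂ (F i)]
  [∀ i, FiniteDimensional ℂ (F i)]
  [∀ i, NormedAddCommGroup (L i)] [∀ i, NormedSpace ℂ (L i)]
  [∀ i, FiniteDimensional ℂ (L i)]

lemma blocks_vanish
    (hL : ∀ i, Module.finrank ℂ (L i) = 1)
    (yF : VogDC n F) (yL : VogDC n L) (hyL : ∀ i, yL i ≠ 0)
    (x : VogC n (fun i => F i × L i))
    (hx : IsConormalC x (fun i => (yF i).prodMap (yL i))) :
    (∀ i : Fin n, ∀ f : F i.castSucc, ((x i) (f, 0)).2 = 0) ∧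
    (∀ i : Fin n, ∀ l : L i.castSucc, ((x i) (0, l)).1 = 0) := by
  set y : VogDC n (fun i => F i × L i) := fun i => (yF i).prodMap (yL i) with hy
  -- interior equations
  have eqA : ∀ (k : ℕ) (hk1 : k + 1 < n),
      ∀ v, (x ⟨k, Nat.lt_of_succ_lt hk1⟩) ((y ⟨k, Nat.lt_of_succ_lt hk1⟩) v)
        = (y ⟨k + 1, hk1⟩) ((x ⟨k + 1, hk1⟩) v) := by
    intro k hk1 v
    have h := hx (Fin.succ (⟨k, Nat.lt_of_succ_lt hk1⟩ : Fin n))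
    rw [Fin.cases_succ] at h
    have h2 := Fin.lastCases_castSucc
      (motive := fun j => ((F j × L j) →L[ℂ] F j × L j)) (last := 0)
      (cast := fun i => (y i).comp (x i)) ⟨k + 1, hk1⟩
    exact DFunLike.congr_fun (h.trans h2) v
  -- boundary equation at 0
  have eq0 : ∀ (h0 : 0 < n), ∀ v, (y ⟨0, h0⟩) ((x ⟨0, h0⟩) v) = 0 := by
    intro h0 v
    have h := hx (0 : Fin (n + 1))
    rw [Fin.cases_zero] at h
    have h2 := Fin.lastCases_castSucc
      (motive := fun j => ((F j × L j) →L[ℂ] F j × L j)) (last := 0)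
      (cast := fun i => (y i).comp (x i)) ⟨0, h0⟩
    exact DFunLike.congr_fun (h.trans h2).symm v
  -- boundary equation at the top
  have eqN : ∀ (h0 : 0 < n), ∀ v,
      (x ⟨n - 1, Nat.sub_lt h0 Nat.one_pos⟩) ((y ⟨n - 1, Nat.sub_lt h0 Nat.one_pos⟩) v) = 0 := by
    intro h0
    obtain ⟨m, rfl⟩ : ∃ m, n = m + 1 := ⟨n - 1, by omega⟩
    intro v
    have h := hx (Fin.last (m + 1))
    rw [Fin.lastCases_last] at h
    have h2 := Fin.cases_succ
      (motive := fun j => ((F j × L j) →L[ℂ] F j × L j)) (zero := 0)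
      (succ := fun i => (x i).comp (y i)) ⟨m, Nat.lt_succ_self m⟩
    simpa using DFunLike.congr_fun (h2.symm.trans h) v
  constructor
  · -- C blocks vanish, forward induction
    have key : ∀ (k : ℕ) (hk : k < n), ∀ f : F (⟨k, hk⟩ : Fin n).castSucc,
        ((x ⟨k, hk⟩) (f, 0)).2 = 0 := by
      intro k
      induction k with
      | zero =>
        intro hk f
        have h := eq0 hk (f, 0)
        have h2 : yL ⟨0, hk⟩ ((x ⟨0, hk⟩ (f, 0)).2) = 0 := congrArg Prod.snd h
        have hinj := (bij_of_ne_zero (hL _) (hL _) (yL ⟨0, hk⟩) (hyL _)).2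
        have := hinj (h2.trans (map_zero (yL ⟨0, hk⟩)).symm)
        exact this
      | succ m ih =>
        intro hk f
        have hm : m < n := Nat.lt_of_succ_lt hk
        have h := eqA m hk (f, 0)
        -- LHS: x m applied to (yF m f, 0)
        have hyv : (y ⟨m, hm⟩) ((f, 0) : F _ × L _) = ((yF ⟨m, hm⟩ f, 0) : F _ × L _) := by
          simp [hy]
        rw [hyv] at h
        have hL0 : ((x ⟨m, hm⟩) ((yF ⟨m, hm⟩ f, 0) : F _ × L _)).2 = 0 := ih hm _
        have h2 : yL ⟨m + 1, hk⟩ ((x ⟨m + 1, hk⟩ ((f, 0) : F _ × L _)).2) = 0 := by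
          have := congrArg Prod.snd h
          simp [hy] at this
          exact this.symm.trans hL0
        have hinj := (bij_of_ne_zero (hL _) (hL _) (yL ⟨m + 1, hk⟩) (hyL _)).2
        exact hinj (h2.trans (map_zero (yL ⟨m + 1, hk⟩)).symm)
    intro i f
    have := key i.1 i.2 (by exact f)
    simpa using this
  · -- B blocks vanish, downward induction
    have key : ∀ (m : ℕ) (k : ℕ) (hk : k < n), n - 1 - k = m →
        ∀ l : L (⟨k, hk⟩ : Fin n).castSucc, ((x ⟨k, hk⟩) (0, l)).1 = 0 := by
      intro m
      induction m with
      | zero =>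
        intro k hk hkm l
        have hkeq : k = n - 1 := by omega
        subst hkeq
        have hsurj := (bij_of_ne_zero (hL _) (hL _) (yL ⟨n - 1, hk⟩) (hyL _)).1
        obtain ⟨l', hl'⟩ := hsurj l
        have h := eqN (by omega) ((0, l') : F _ × L _)
        have hyv : (y ⟨n - 1, hk⟩) ((0, l') : F _ × L _)
            = ((0, yL ⟨n - 1, hk⟩ l') : F _ × L _) := by simp [hy]
        rw [hyv] at h
        rw [← hl']
        exact congrArg Prod.fst h
      | succ m ih =>
        intro k hk hkm l
        have hk1 : k + 1 < n := by omega
        have hnext := ih (k + 1) hk1 (by omega)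
        have hsurj := (bij_of_ne_zero (hL _) (hL _) (yL ⟨k, hk⟩) (hyL _)).1
        obtain ⟨l', hl'⟩ := hsurj l
        have h := eqA k hk1 ((0, l') : F _ × L _)
        have hyv : (y ⟨k, hk⟩) ((0, l') : F _ × L _)
            = ((0, yL ⟨k, hk⟩ l') : F _ × L _) := by simp [hy]
        rw [hyv] at h
        rw [← hl']
        have h1 := congrArg Prod.fst h
        simp [hy] at h1
        exact h1.trans ((congrArg (yF ⟨k + 1, hk1⟩) (hnext l')).trans (map_zero _))
    intro i l
    have := key (n - 1 - i.1) i.1 i.2 rfl (by exact l)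
    simpa using this

end Blocks

/-- With `E_i = F_i ⊕ L_i`, `dim L_i = 1`, `y = ᵗε(y_F, y_L)` with all
components of `y_L` nonzero, and `x` any element with `(x, y)` commuting: the element
`s = (id_{F_i} ⊕ (−id_{L_i}))_i` lies in the connected component of the identity of the
stabilizer `Z_H(x, y)` (with the subspace topology induced from the standard topology on
`∏_i GL(E_i)`); indeed the connected subgroup `{(a·id_{F_i} ⊕ b·id_{L_i})_i : a, b ∈ ℂ^×}`
is contained in `Z_H(x, y)` and contains both `s` and the identity. -/
theorem stmt_7 (n : ℕ) (F L : Fin (n + 1) → Type)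
    [∀ i, NormedAddCommGroup (F i)] [∀ i, NormedSpace ℂ (F i)]
    [∀ i, FiniteDimensional ℂ (F i)]
    [∀ i, NormedAddCommGroup (L i)] [∀ i, NormedSpace ℂ (L i)]
    [∀ i, FiniteDimensional ℂ (L i)]
    (hL : ∀ i, Module.finrank ℂ (L i) = 1)
    (yF : VogDC n F) (yL : VogDC n L) (hyL : ∀ i, yL i ≠ 0)
    (x : VogC n (fun i => F i × L i))
    (hx : IsConormalC x (fun i => (yF i).prodMap (yL i))) :
    sElt F L ∈ connectedComponentIn
        (stabSet x (fun i => (yF i).prodMap (yL i)))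
        (1 : ∀ i : Fin (n + 1), (F i × L i) →L[ℂ] (F i × L i)) ∧
    torus F L ⊆ stabSet x (fun i => (yF i).prodMap (yL i)) ∧
    IsConnected (torus F L) ∧
    sElt F L ∈ torus F L ∧
    (1 : ∀ i : Fin (n + 1), (F i × L i) →L[ℂ] (F i × L i)) ∈ torus F L := by
  obtain ⟨hCb, hBb⟩ := blocks_vanish F L hL yF yL hyL x hx
  -- generic multiplication fact
  have hmulgen : ∀ (c d c' d' : ℂ), c' * c = 1 → d' * d = 1 → ∀ i : Fin (n + 1),
      ((c' • ContinuousLinearMap.id ℂ (F i)).prodMap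
        (d' • ContinuousLinearMap.id ℂ (L i))) *
      ((c • ContinuousLinearMap.id ℂ (F i)).prodMap
        (d • ContinuousLinearMap.id ℂ (L i))) = 1 := by
    intro c d c' d' hc hd i
    refine ContinuousLinearMap.ext fun v => ?_
    simp [ContinuousLinearMap.mul_apply, smul_smul, hc, hd, Prod.ext_iff]
  -- the torus is inside the stabilizer
  have hsub : torus F L ⊆ stabSet x (fun i => (yF i).prodMap (yL i)) := by
    rintro g ⟨a, b, ha, hb, rfl⟩
    set gi : ∀ i : Fin (n + 1), (F i × L i) →L[ℂ] (F i × L i) :=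
      fun i => (a⁻¹ • ContinuousLinearMap.id ℂ (F i)).prodMap
        (b⁻¹ • ContinuousLinearMap.id ℂ (L i)) with hgi
    have hm1 := hmulgen a b a⁻¹ b⁻¹ (inv_mul_cancel₀ ha) (inv_mul_cancel₀ hb)
    have hm2 := hmulgen a⁻¹ b⁻¹ a b (mul_inv_cancel₀ ha) (mul_inv_cancel₀ hb)
    have hinv : ∀ i : Fin (n + 1),
        Ring.inverse ((a • ContinuousLinearMap.id ℂ (F i)).prodMap
          (b • ContinuousLinearMap.id ℂ (L i))) = gi i :=
      fun i => Ring.inverse_unit ⟨_, gi i, hm2 i, hm1 i⟩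
    refine ⟨fun i => ⟨⟨_, gi i, hm2 i, hm1 i⟩, rfl⟩, ?_, ?_⟩
    · intro i
      rw [hinv]
      refine ContinuousLinearMap.ext fun v => ?_
      obtain ⟨f, l⟩ := v
      have hgil : (gi i.castSucc) ((f, l) : F _ × L _) = (a⁻¹ • f, b⁻¹ • l) := by
        simp [hgi]
      have hsplit : ((a⁻¹ • f, b⁻¹ • l) : F _ × L _)
          = a⁻¹ • ((f, 0) : F _ × L _) + b⁻¹ • ((0, l) : F _ × L _) := by
        simp [Prod.smul_mk]
      have hfl : ((f, l) : F _ × L _) = ((f, 0) : F _ × L _) + ((0, l) : F _ × L _) := by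
        simp
      simp only [ContinuousLinearMap.comp_apply]
      rw [hgil, hsplit, map_add, map_smul, map_smul, map_add, map_smul, map_smul]
      conv_rhs => rw [hfl, map_add]
      have h1 := hCb i f
      have h2 := hBb i l
      refine Prod.ext ?_ ?_
      · simp [h2, smul_smul, inv_mul_cancel₀ ha, mul_inv_cancel₀ ha]
      · simp [h1, smul_smul, inv_mul_cancel₀ hb, mul_inv_cancel₀ hb]
    · intro i
      rw [hinv]
      refine ContinuousLinearMap.ext fun v => ?_
      obtain ⟨f, l⟩ := v
      simp only [ContinuousLinearMap.comp_apply]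
      simp [hgi, map_smul, smul_smul, mul_inv_cancel₀ ha, mul_inv_cancel₀ hb, inv_mul_cancel₀ ha, inv_mul_cancel₀ hb]
  -- connectedness of the torus
  have hconn : IsConnected (torus F L) := by
    have h2 : (1 : Cardinal) < Module.rank ℝ ℂ := by
      rw [Complex.rank_real_complex]
      norm_num
    have hC0 : IsConnected ({(0 : ℂ)}ᶜ) :=
      isConnected_compl_singleton_of_one_lt_rank h2 0
    have hS : IsConnected (({(0 : ℂ)}ᶜ : Set ℂ) ×ˢ ({(0 : ℂ)}ᶜ : Set ℂ)) := hC0.prod hC0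
    have hphi : Continuous (fun p : ℂ × ℂ => (fun i : Fin (n + 1) =>
        (p.1 • ContinuousLinearMap.id ℂ (F i)).prodMap
          (p.2 • ContinuousLinearMap.id ℂ (L i)))) := by
      refine continuous_pi fun i => ?_
      have heq : (fun p : ℂ × ℂ =>
          (p.1 • ContinuousLinearMap.id ℂ (F i)).prodMap
            (p.2 • ContinuousLinearMap.id ℂ (L i)))
          = fun p : ℂ × ℂ => ContinuousLinearMap.prodMapL ℂ (F i) (F i) (L i) (L i)
              ((p.1 • ContinuousLinearMap.id ℂ (F i)), (p.2 • ContinuousLinearMap.id ℂ (L i))) := by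
        funext p
        simp
      rw [heq]
      exact (ContinuousLinearMap.prodMapL ℂ (F i) (F i) (L i) (L i)).continuous.comp
        ((continuous_fst.smul continuous_const).prodMk (continuous_snd.smul continuous_const))
    have himg : torus F L = (fun p : ℂ × ℂ => (fun i : Fin (n + 1) =>
        (p.1 • ContinuousLinearMap.id ℂ (F i)).prodMap
          (p.2 • ContinuousLinearMap.id ℂ (L i)))) ''
        (({(0 : ℂ)}ᶜ : Set ℂ) ×ˢ ({(0 : ℂ)}ᶜ : Set ℂ)) := by
      ext g
      constructor
      · rintro ⟨a, b, ha, hb, rfl⟩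
        exact ⟨(a, b), ⟨ha, hb⟩, rfl⟩
      · rintro ⟨⟨a, b⟩, ⟨ha, hb⟩, rfl⟩
        exact ⟨a, b, ha, hb, rfl⟩
    rw [himg]
    exact hS.image _ hphi.continuousOn
  have hsmem : sElt F L ∈ torus F L := by
    refine ⟨1, -1, one_ne_zero, neg_ne_zero.mpr one_ne_zero, ?_⟩
    funext i
    show (ContinuousLinearMap.id ℂ (F i)).prodMap (-(ContinuousLinearMap.id ℂ (L i))) = _
    rw [one_smul, neg_one_smul]
  have h1mem : (1 : ∀ i : Fin (n + 1), (F i × L i) →L[ℂ] (F i × L i)) ∈ torus F L := by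
    refine ⟨1, 1, one_ne_zero, one_ne_zero, ?_⟩
    funext i
    refine ContinuousLinearMap.ext fun v => ?_
    simp
  exact ⟨IsPreconnected.subset_connectedComponentIn hconn.isPreconnected h1mem hsub hsmem,
    hsub, hconn, hsmem, h1mem⟩
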